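/- Define ζ : [0, ∞) → ℝ by ζ(t) = 2(√t − 1) for 0 ≤ t ≤ 1 and ζ(t) = 2·log((t+1)/2) for t > 1. Let n ≥ 7 be an integer and let 𝒴 be a finite nonempty alphabet. Then for any probability mass functions f and p on 𝒴, Σ over y ∈ 𝒴 with p(y) > 0 of p(y)·(−ζ(f(y)/p(y)) − ζ(f(y)/p(y))²/(4·log(n·|𝒴|))) ≥ 0. -/
import Mathlib


open scoped BigOperators

/-- The function ζ from the paper: ζ(t) = 2(√t − 1) for t ≤ 1, ζ(t) = 2 log((t+1)/2) for t > 1. -/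
noncomputable def zeta (t : ℝ) : ℝ :=
  if t ≤ 1 then 2 * (Real.sqrt t - 1) else 2 * Real.log ((t + 1) / 2)

lemma zeta_key (t : ℝ) (ht : 0 ≤ t) {L : ℝ} (hL : 1 ≤ L) :
    1 - t ≤ - zeta t - (zeta t) ^ 2 / (4 * L) := by
  have hz2 : (zeta t) ^ 2 / (4 * L) ≤ (zeta t) ^ 2 / 4 := by
    apply div_le_div_of_nonneg_left (sq_nonneg _) (by norm_num) (by linarith)
  have main : 1 - t ≤ - zeta t - (zeta t) ^ 2 / 4 := by
    unfold zeta
    by_cases h : t ≤ 1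
    · rw [if_pos h]
      have hr : Real.sqrt t ^ 2 = t := Real.sq_sqrt ht
      have hr1 : Real.sqrt t ≤ 1 := by
        nlinarith [Real.sqrt_nonneg t]
      nlinarith [Real.sqrt_nonneg t]
    · rw [if_neg h]
      push_neg at h
      set u := Real.log ((t + 1) / 2) with hu
      have hpos : (0:ℝ) < (t + 1) / 2 := by linarith
      have hu0 : 0 ≤ u := Real.log_nonneg (by linarith)
      have hexp : Real.exp u = (t + 1) / 2 := Real.exp_log hpos
      have hq : 1 + u + u ^ 2 / 2 ≤ Real.exp u := Real.quadratic_le_exp_of_nonneg hu0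
      rw [hexp] at hq
      nlinarith
  linarith

/-- for an integer n ≥ 7, a finite nonempty alphabet 𝒴, and probability mass
functions f, p on 𝒴, the expectation under y ∼ p of
−ζ(f(y)/p(y)) − ζ(f(y)/p(y))²/(4 log(n|𝒴|)) is nonnegative (the sum ranging over y with
p(y) > 0). -/
theorem stmt15 {Y : Type*} [Fintype Y] [Nonempty Y] (n : ℕ) (hn : 7 ≤ n)
    (f p : Y → ℝ) (hf0 : ∀ y, 0 ≤ f y) (hf1 : ∑ y, f y = 1)
    (hp0 : ∀ y, 0 ≤ p y) (hp1 : ∑ y, p y = 1) :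
    0 ≤ ∑ y ∈ Finset.univ.filter (fun y => 0 < p y),
        p y * (- zeta (f y / p y)
          - (zeta (f y / p y)) ^ 2 / (4 * Real.log ((n : ℝ) * (Fintype.card Y : ℝ)))) := by
  set L := Real.log ((n : ℝ) * (Fintype.card Y : ℝ)) with hLdef
  have hcard : (1 : ℝ) ≤ (Fintype.card Y : ℝ) := by
    exact_mod_cast Fintype.card_pos
  have hn' : (7 : ℝ) ≤ (n : ℝ) := by exact_mod_cast hn
  have h7 : (7 : ℝ) ≤ (n : ℝ) * (Fintype.card Y : ℝ) := by nlinarith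
  have hL : 1 ≤ L := by
    rw [hLdef, ← Real.exp_le_exp, Real.exp_log (by linarith)]
    have he : Real.exp 1 < 2.7182818286 := Real.exp_one_lt_d9
    linarith
  set s := Finset.univ.filter (fun y => 0 < p y) with hs
  have hterm : ∀ y ∈ s, p y - f y ≤
      p y * (- zeta (f y / p y) - (zeta (f y / p y)) ^ 2 / (4 * L)) := by
    intro y hy
    have hpy : 0 < p y := (Finset.mem_filter.mp hy).2
    have hk := zeta_key (f y / p y) (div_nonneg (hf0 y) hpy.le) hL
    have := mul_le_mul_of_nonneg_left hk hpy.le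
    calc p y - f y = p y * (1 - f y / p y) := by field_simp
      _ ≤ _ := this
  have hsum := Finset.sum_le_sum hterm
  have hps : ∑ y ∈ s, p y = 1 := by
    rw [← hp1]
    apply Finset.sum_subset (Finset.subset_univ _)
    intro y _ hy
    rcases (hp0 y).lt_or_eq with h | h
    · exact absurd (Finset.mem_filter.mpr ⟨Finset.mem_univ y, h⟩) hy
    · exact h.symm
  have hfs : ∑ y ∈ s, f y ≤ 1 := by
    rw [← hf1]
    exact Finset.sum_le_sum_of_subset_of_nonneg (Finset.subset_univ _)
      (fun y _ _ => hf0 y)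
  have : 0 ≤ ∑ y ∈ s, (p y - f y) := by
    rw [Finset.sum_sub_distrib, hps]
    linarith
  linarith
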